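/- arXiv:2106.00278 — 3 statements merged into one kernel-verified Lean document; each statement's English description precedes it below -/
import Mathlib

section
/- Every connected 3-regular graph of diameter 3 requires at least 7 colors in any harmonious coloring, i.e., h(G) ≥ 7. -/
/-- A coloring `c` is harmonious for `G` if it is a proper vertex coloring and
every unordered pair of colors appears on the endpoints of at most one edge. -/
def IsHarmonious {V α : Type*} (G : SimpleGraph V) (c : V → α) : Prop :=
  (∀ ⦃u v : V⦄, G.Adj u v → c u ≠ c v) ∧
  ∀ e ∈ G.edgeSet, ∀ e' ∈ G.edgeSet, Sym2.map c e = Sym2.map c e' → e = e'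

/-- The harmonious chromatic number: the least `k` such that `G` admits a
harmonious coloring with `k` colors. -/
noncomputable def harmoniousChromaticNumber {V : Type*} [Fintype V] (G : SimpleGraph V) : ℕ :=
  sInf {k | ∃ c : V → Fin k, IsHarmonious G c}


theorem harmonious_cubic_diameter_three {V : Type*} [Fintype V]
    (G : SimpleGraph V) [DecidableRel G.Adj]
    (hconn : G.Connected)
    (hreg : ∀ v : V, G.degree v = 3)
    (hdiam_le : ∀ u v : V, G.dist u v ≤ 3)
    (hdiam_eq : ∃ u v : V, G.dist u v = 3) :
    7 ≤ harmoniousChromaticNumber G := by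
  classical
  obtain ⟨u, v, huv⟩ := hdiam_eq
  apply le_csInf
  · exact ⟨Fintype.card V, (Fintype.equivFin V : V ≃ Fin _),
      fun a b hab h => G.ne_of_adj hab ((Fintype.equivFin V).injective h),
      fun e _ e' _ h => Sym2.map.injective (Fintype.equivFin V).injective h⟩
  rintro k ⟨c, hc1, hc2⟩
  have key : ∀ a b w w', c a = c b → G.Adj a w → G.Adj b w' → c w = c w' →
      (a = b ∧ w = w') ∨ (a = w' ∧ b = w) := by
    intro a b w w' hab haw hbw' hww'
    have h1 : (s(a,w) : Sym2 V) ∈ G.edgeSet := haw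
    have h2 : (s(b,w') : Sym2 V) ∈ G.edgeSet := hbw'
    have := hc2 _ h1 _ h2 (by simp [hab, hww'])
    rw [Sym2.eq_iff] at this
    tauto
  by_cases hinj : Function.Injective c
  · -- card V ≤ k, and card V ≥ 8
    have hk : Fintype.card V ≤ k := by
      simpa using Fintype.card_le_of_injective c hinj
    have hne : u ≠ v := by rintro rfl; rw [SimpleGraph.dist_self] at huv; omega
    have hvu : ¬ G.Adj v u := by
      intro h
      have : G.dist u v = 1 := SimpleGraph.dist_eq_one_iff_adj.2 h.symm
      omega
    have huu : u ∉ G.neighborFinset u := by simp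
    have huNv : u ∉ G.neighborFinset v := by
      simpa using fun h => hvu h
    have hvNu : v ∉ G.neighborFinset u := by
      intro h
      exact hvu ((G.mem_neighborFinset u v).1 h).symm
    have hvNv : v ∉ G.neighborFinset v := by simp
    have hdisj : Disjoint (G.neighborFinset u) (G.neighborFinset v) := by
      rw [Finset.disjoint_left]
      intro w hw hw'
      have h1 : G.Adj u w := (G.mem_neighborFinset u w).1 hw
      have h2 : G.Adj w v := ((G.mem_neighborFinset v w).1 hw').symm
      have := hconn.dist_triangle (u := u) (v := w) (w := v)
      rw [SimpleGraph.dist_eq_one_iff_adj.2 h1, SimpleGraph.dist_eq_one_iff_adj.2 h2, huv] at this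
      omega
    have hcard : (insert u (insert v (G.neighborFinset u ∪ G.neighborFinset v))).card = 8 := by
      rw [Finset.card_insert_of_notMem (by simp [hne, huu, huNv]),
        Finset.card_insert_of_notMem (by simp [hvNu, hvNv]),
        Finset.card_union_of_disjoint hdisj]
      simp [hreg]
    have : 8 ≤ Fintype.card V := by
      rw [← hcard]
      exact Finset.card_le_univ _
    omega
  · -- two vertices share a color
    simp only [Function.Injective, not_forall] at hinj
    obtain ⟨x, y, hcxy, hxy⟩ := hinj
    have hnadj : ¬ G.Adj x y := fun h => hc1 h hcxy
    have hdisj : Disjoint (G.neighborFinset x) (G.neighborFinset y) := by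
      rw [Finset.disjoint_left]
      intro w hw hw'
      have h1 : G.Adj x w := (G.mem_neighborFinset x w).1 hw
      have h2 : G.Adj y w := (G.mem_neighborFinset y w).1 hw'
      rcases key x y w w hcxy h1 h2 rfl with ⟨h, -⟩ | ⟨rfl, rfl⟩
      · exact hxy h
      · exact hxy rfl
    set S : Finset V := insert x (G.neighborFinset x ∪ G.neighborFinset y) with hS
    have hxS : x ∉ G.neighborFinset x ∪ G.neighborFinset y := by
      simp only [Finset.mem_union, SimpleGraph.mem_neighborFinset]
      rintro (h | h)
      · exact G.irrefl h
      · exact hc1 h hcxy.symm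
    have hScard : S.card = 7 := by
      rw [hS, Finset.card_insert_of_notMem hxS, Finset.card_union_of_disjoint hdisj]
      simp [hreg]
    have hinjS : Set.InjOn c S := by
      intro a ha b hb hab
      simp only [hS, Finset.coe_insert, Set.mem_insert_iff, Finset.coe_union,
        Set.mem_union, Finset.mem_coe, SimpleGraph.mem_neighborFinset] at ha hb
      rcases ha with rfl | ha <;> rcases hb with rfl | hb
      · rfl
      · rcases hb with hb | hb
        · exact absurd hab (hc1 hb)
        · exact absurd (hcxy.symm.trans hab) (hc1 hb)
      · rcases ha with ha | ha
        · exact absurd hab.symm (hc1 ha)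
        · exact absurd (hcxy.symm.trans hab.symm) (hc1 ha)
      · rcases ha with ha | ha <;> rcases hb with hb | hb
        · rcases key x x a b rfl ha hb hab with ⟨-, h⟩ | ⟨rfl, rfl⟩
          · exact h
          · rfl
        · rcases key x y a b hcxy ha hb hab with ⟨h, -⟩ | ⟨rfl, rfl⟩
          · exact absurd h hxy
          · exact absurd hb.symm hnadj
        · rcases key y x a b hcxy.symm ha hb hab with ⟨h, -⟩ | ⟨rfl, rfl⟩
          · exact absurd h.symm hxy
          · exact absurd hb hnadj
        · rcases key y y a b rfl ha hb hab with ⟨-, h⟩ | ⟨rfl, rfl⟩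
          · exact h
          · rfl
    have := Finset.card_le_card_of_injOn c (fun _ _ => Finset.mem_univ _) hinjS
    simpa [hScard] using this
end

section
/- Let G = (V,E) be a finite simple graph and let k ≤ |V|. Construct graph H with two connected components: G' obtained from G by adding three new mutually adjacent vertices v₁, v₂, v₃ each adjacent to every vertex of V, and G'' a disjoint clique on |V| vertices. Then H has a harmonious coloring with 2|V| + 3 − k colors if and only if G has an independent set of size k. -/
/-- The two-component graph of the reduction: the first component is `G`
together with three new mutually adjacent vertices, each adjacent to every
vertex of `G`; the second component is a clique on a disjoint copy of `V`. -/
def reductionGraph {V : Type*} (G : SimpleGraph V) :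
    SimpleGraph (V ⊕ (Fin 3 ⊕ V)) :=
  SimpleGraph.fromRel (fun x y =>
    match x, y with
    | .inl a, .inl b => G.Adj a b
    | .inl _, .inr (.inl _) => True
    | .inr (.inl _), .inr (.inl _) => True
    | .inr (.inr _), .inr (.inr _) => True
    | _, _ => False)

/-!
In a harmonious colouring of `reductionGraph G` (with `n = |V|`) the cone `G + K₃` and the
clique `Kₙ` are each coloured injectively, since any two cone vertices are adjacent or share an
apex. With `2n + 3 - k` colours, at least `k` cone vertices therefore carry a colour that also
occurs on the clique. These vertices are independent, because every pair of clique colours is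
already used by a clique edge, and for `k ≥ 2` they cannot include an apex; so they give an
independent set of `G`.

Conversely, for an independent set `s` of size `k`, colour the cone injectively and let the
clique reuse the colours of `s` together with `n - k` fresh ones. The only colour pairs the two
components share are pairs from `s`, and these span no edge.
-/

open Finset Function

section Harmonious

variable {W α β : Type*} {H : SimpleGraph W} {c : W → α}

theorem isHarmonious_iff_adj : IsHarmonious H c ↔ (∀ ⦃u v⦄, H.Adj u v → c u ≠ c v) ∧
    ∀ ⦃u v u' v'⦄, H.Adj u v → H.Adj u' v' → c u = c u' → c v = c v' →
      s(u, v) = s(u', v') := by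
  refine and_congr_right fun _ => ⟨fun h u v u' v' huv hu'v' hu hv => ?_, fun h => ?_⟩
  · exact h _ huv _ hu'v' (by rw [Sym2.map_mk, Sym2.map_mk, hu, hv])
  · intro e he e' he' hee'
    induction e using Sym2.ind with | _ u v =>
    induction e' using Sym2.ind with | _ u' v' =>
    rw [SimpleGraph.mem_edgeSet] at he he'
    rw [Sym2.map_mk, Sym2.map_mk, Sym2.eq_iff] at hee'
    rcases hee' with ⟨hu, hv⟩ | ⟨hu, hv⟩
    · exact h he he' hu hv
    · exact (h he he'.symm hu hv).trans Sym2.eq_swap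

theorem IsHarmonious.sym2_eq (hc : IsHarmonious H c) {u v u' v' : W} (huv : H.Adj u v)
    (hu'v' : H.Adj u' v') (hu : c u = c u') (hv : c v = c v') : s(u, v) = s(u', v') :=
  (isHarmonious_iff_adj.1 hc).2 huv hu'v' hu hv

theorem IsHarmonious.ne_of_adj_of_adj (hc : IsHarmonious H c) {w u v : W} (hu : H.Adj w u)
    (hv : H.Adj w v) (huv : u ≠ v) : c u ≠ c v :=
  fun h => huv (Sym2.congr_right.1 (hc.sym2_eq hu hv rfl h))

theorem IsHarmonious.comp_injective (hc : IsHarmonious H c) {f : α → β} (hf : Injective f) :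
    IsHarmonious H (f ∘ c) := by
  rw [isHarmonious_iff_adj] at hc ⊢
  exact ⟨fun u v h => hf.ne (hc.1 h), fun u v u' v' h h' hu hv => hc.2 h h' (hf hu) (hf hv)⟩

theorem IsHarmonious.injOn_of_isClique (hc : IsHarmonious H c) {Q : Set W}
    (hQ : H.IsClique Q) : Set.InjOn c Q :=
  fun _ hx _ hy hxy => by_contra fun hne => hc.1 (hQ hx hy hne) hxy

/-- An edge inside `P` between vertices with colours from `Q` would repeat the colour pair of an
edge of `Q`. -/
theorem IsHarmonious.isIndepSet_filter_mem_image [DecidableEq α] (hc : IsHarmonious H c)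
    {P Q : Finset W} (hPQ : Disjoint P Q) (hQ : H.IsClique (Q : Set W)) :
    H.IsIndepSet (P.filter (c · ∈ Q.image c) : Set W) := by
  intro p hp p' hp' _ hadj
  simp only [coe_filter, mem_image, Set.mem_ofPred_eq] at hp hp'
  obtain ⟨hpP, q, hq, hqp⟩ := hp
  obtain ⟨-, q', hq', hqp'⟩ := hp'
  have hqq' : q ≠ q' := by rintro rfl; exact hc.1 hadj (hqp.symm.trans hqp')
  have hpq := hc.sym2_eq hadj (hQ hq hq' hqq') hqp.symm hqp'.symm
  have hp_mem : p ∈ s(q, q') := hpq ▸ Sym2.mem_mk_left p p'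
  rcases Sym2.mem_iff.1 hp_mem with rfl | rfl
  exacts [disjoint_left.1 hPQ hpP hq, disjoint_left.1 hPQ hpP hq']

theorem isHarmonious_of_injOn {P Q : Set W} (hP : Set.InjOn c P) (hQ : Set.InjOn c Q)
    (hadj : ∀ ⦃u v⦄, H.Adj u v → u ∈ P ∧ v ∈ P ∨ u ∈ Q ∧ v ∈ Q)
    (hPQ : H.IsIndepSet {p ∈ P | c p ∈ c '' Q}) : IsHarmonious H c := by
  refine isHarmonious_iff_adj.2 ⟨fun u v h hc => ?_, fun u v u' v' h h' hu hv => ?_⟩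
  · rcases hadj h with ⟨hu, hv⟩ | ⟨hu, hv⟩
    exacts [H.ne_of_adj h (hP hu hv hc), H.ne_of_adj h (hQ hu hv hc)]
  · have separated :
        ∀ ⦃x y⦄, x ∈ P → y ∈ P → c x ∈ c '' Q → c y ∈ c '' Q → ¬H.Adj x y :=
      fun x y hx hy hxQ hyQ hxy => hPQ ⟨hx, hxQ⟩ ⟨hy, hyQ⟩ (H.ne_of_adj hxy) hxy
    rcases hadj h with ⟨huP, hvP⟩ | ⟨huQ, hvQ⟩ <;>
      rcases hadj h' with ⟨hu'P, hv'P⟩ | ⟨hu'Q, hv'Q⟩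
    · rw [hP huP hu'P hu, hP hvP hv'P hv]
    · exact absurd h (separated huP hvP ⟨u', hu'Q, hu.symm⟩ ⟨v', hv'Q, hv.symm⟩)
    · exact absurd h' (separated hu'P hv'P ⟨u, huQ, hu⟩ ⟨v, hvQ, hv⟩)
    · rw [hQ huQ hu'Q hu, hQ hvQ hv'Q hv]

end Harmonious

namespace Finset

variable {α β : Type*} [DecidableEq β] {f : α → β} {P : Finset α}

theorem card_filter_mem_image_le (Q : Finset α) (hP : Set.InjOn f P) :
    #(P.filter (f · ∈ Q.image f)) ≤ #Q :=
  calc #(P.filter (f · ∈ Q.image f))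
      = #((P.filter (f · ∈ Q.image f)).image f) :=
        (card_image_of_injOn (hP.mono (filter_subset _ _))).symm
    _ ≤ #(Q.image f) := card_le_card fun _ => by simp only [mem_image, mem_filter]; aesop
    _ ≤ #Q := card_image_le

theorem card_add_card_le_card_add_card_filter_mem_image [Fintype β] {Q : Finset α}
    (hP : Set.InjOn f P) (hQ : Set.InjOn f Q) :
    #P + #Q ≤ Fintype.card β + #(P.filter (f · ∈ Q.image f)) := by
  have hinter : P.image f ∩ Q.image f = (P.filter (f · ∈ Q.image f)).image f := by
    rw [← filter_mem_eq_inter, filter_image]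
  calc #P + #Q = #(P.image f ∪ Q.image f) + #(P.image f ∩ Q.image f) := by
        rw [card_union_add_card_inter, card_image_of_injOn hP, card_image_of_injOn hQ]
    _ ≤ Fintype.card β + #(P.filter (f · ∈ Q.image f)) := by
        rw [hinter, card_image_of_injOn (hP.mono (filter_subset _ _))]
        exact Nat.add_le_add_right (card_le_univ _) _

end Finset

section Reduction

variable {V : Type*} {G : SimpleGraph V}

@[simp]
theorem reductionGraph_adj_inl_inl {a b : V} :
    (reductionGraph G).Adj (.inl a) (.inl b) ↔ G.Adj a b := by
  simp only [reductionGraph, SimpleGraph.fromRel_adj, ne_eq, Sum.inl.injEq]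
  exact ⟨fun ⟨_, h⟩ => h.elim id G.adj_symm, fun h => ⟨G.ne_of_adj h, .inl h⟩⟩

@[simp]
theorem reductionGraph_adj_inl_inr_inl (a : V) (i : Fin 3) :
    (reductionGraph G).Adj (.inl a) (.inr (.inl i)) := by
  simp [reductionGraph]

@[simp]
theorem reductionGraph_adj_inr_inl_inr_inl {i j : Fin 3} :
    (reductionGraph G).Adj (.inr (.inl i)) (.inr (.inl j)) ↔ i ≠ j := by
  simp [reductionGraph]

@[simp]
theorem reductionGraph_adj_inr_inr_inr_inr {u v : V} :
    (reductionGraph G).Adj (.inr (.inr u)) (.inr (.inr v)) ↔ u ≠ v := by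
  simp [reductionGraph]

variable (V) [Fintype V]

def coneVertices : Finset (V ⊕ (Fin 3 ⊕ V)) := univ.disjSum (univ.disjSum ∅)

def cliqueVertices : Finset (V ⊕ (Fin 3 ⊕ V)) :=
  (∅ : Finset V).disjSum ((∅ : Finset (Fin 3)).disjSum univ)

variable {V}

@[simp] theorem inl_mem_coneVertices (a : V) : .inl a ∈ coneVertices V := by
  simp [coneVertices]

@[simp] theorem inr_inl_mem_coneVertices (i : Fin 3) : .inr (.inl i) ∈ coneVertices V := by
  simp [coneVertices]

@[simp] theorem inr_inr_notMem_coneVertices (u : V) : .inr (.inr u) ∉ coneVertices V := by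
  simp [coneVertices]

@[simp] theorem inl_notMem_cliqueVertices (a : V) : .inl a ∉ cliqueVertices V := by
  simp [cliqueVertices]

@[simp] theorem inr_inl_notMem_cliqueVertices (i : Fin 3) : .inr (.inl i) ∉ cliqueVertices V := by
  simp [cliqueVertices]

@[simp] theorem inr_inr_mem_cliqueVertices (u : V) : .inr (.inr u) ∈ cliqueVertices V := by
  simp [cliqueVertices]

@[simp] theorem card_coneVertices : #(coneVertices V) = Fintype.card V + 3 := by
  simp [coneVertices]

@[simp] theorem card_cliqueVertices : #(cliqueVertices V) = Fintype.card V := by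
  simp [cliqueVertices]

theorem disjoint_coneVertices_cliqueVertices : Disjoint (coneVertices V) (cliqueVertices V) := by
  rw [disjoint_left]
  rintro (a | i | u) hx <;> simp_all

theorem isClique_cliqueVertices : (reductionGraph G).IsClique (cliqueVertices V : Set _) := by
  rintro (a | i | u) hx (b | j | v) hy hne <;> simp_all

theorem reductionGraph_adj_mem_or_mem {x y : V ⊕ (Fin 3 ⊕ V)}
    (h : (reductionGraph G).Adj x y) :
    x ∈ coneVertices V ∧ y ∈ coneVertices V ∨ x ∈ cliqueVertices V ∧ y ∈ cliqueVertices V := by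
  rcases x with a | i | u <;> rcases y with b | j | v <;> simp_all [reductionGraph]

/-- Two distinct vertices of the cone are adjacent or share the neighbour `inr (inl 0)`. -/
theorem IsHarmonious.injOn_coneVertices {α : Type*} {c : V ⊕ (Fin 3 ⊕ V) → α}
    (hc : IsHarmonious (reductionGraph G) c) : Set.InjOn c (coneVertices V) := by
  intro x hx y hy hxy
  by_contra hne
  rcases x with a | i | u <;> rcases y with b | j | v <;>
    simp only [mem_coe, inr_inr_notMem_coneVertices] at hx hy
  · exact hc.ne_of_adj_of_adj (reductionGraph_adj_inl_inr_inl a 0).symm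
      (reductionGraph_adj_inl_inr_inl b 0).symm hne hxy
  · exact hc.1 (reductionGraph_adj_inl_inr_inl a j) hxy
  · exact hc.1 (reductionGraph_adj_inl_inr_inl b i).symm hxy
  · exact hc.1 (reductionGraph_adj_inr_inl_inr_inl.2 (by simpa using hne)) hxy

/-- An independent set of the cone on `G` with at least two vertices avoids the apex triangle. -/
theorem exists_card_eq_of_isIndepSet_reductionGraph {I : Finset (V ⊕ (Fin 3 ⊕ V))} {k : ℕ}
    (hI : I ⊆ coneVertices V) (hind : (reductionGraph G).IsIndepSet I) (hkI : k ≤ #I)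
    (hkV : k ≤ Fintype.card V) :
    ∃ s : Finset V, #s = k ∧ ∀ a ∈ s, ∀ b ∈ s, ¬G.Adj a b := by
  by_cases hk : k ≤ 1
  · obtain ⟨s, -, hs⟩ := exists_subset_card_eq (s := univ) (by simpa using hkV)
    refine ⟨s, hs, fun a ha b hb hab => G.loopless.irrefl b ?_⟩
    rwa [card_le_one.1 (hs ▸ hk) a ha b hb] at hab
  have hright : I.toRight = ∅ := by
    refine eq_empty_of_forall_notMem fun x hx => ?_
    obtain ⟨y, hy, hyx⟩ := exists_mem_ne (by omega : 1 < #I) (.inr x)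
    have hxc := hI (mem_toRight.1 hx)
    have hyc := hI hy
    rcases x with i | u
    · refine hind hy (mem_toRight.1 hx) hyx ?_
      rcases y with b | j | v <;> simp_all
    · exact inr_inr_notMem_coneVertices u hxc
  have hcard : #I.toLeft = #I := by
    simpa [hright] using card_toLeft_add_card_toRight (u := I)
  obtain ⟨s, hs, hsk⟩ := exists_subset_card_eq (hcard ▸ hkI)
  refine ⟨s, hsk, fun a ha b hb hab => ?_⟩
  exact hind (mem_toLeft.1 (hs ha)) (mem_toLeft.1 (hs hb)) (by simpa using G.ne_of_adj hab)
    (reductionGraph_adj_inl_inl.2 hab)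

variable [DecidableEq V]

def reductionColoring (s : Finset V) : V ⊕ (Fin 3 ⊕ V) → V ⊕ (Fin 3 ⊕ ↥sᶜ)
  | .inl a => .inl a
  | .inr (.inl i) => .inr (.inl i)
  | .inr (.inr u) => if h : u ∈ s then .inl u else .inr (.inr ⟨u, mem_compl.2 h⟩)

theorem card_sum_fin_three_sum_compl (s : Finset V) :
    Fintype.card (V ⊕ (Fin 3 ⊕ ↥sᶜ)) = 2 * Fintype.card V + 3 - #s := by
  have := card_le_univ s
  simp only [Fintype.card_sum, Fintype.card_fin, Fintype.card_coe, card_compl]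
  omega

theorem exists_mem_eq_inl_of_reductionColoring_mem_image {s : Finset V}
    {x : V ⊕ (Fin 3 ⊕ V)} (hx : x ∈ coneVertices V)
    (hxQ : reductionColoring s x ∈ reductionColoring s '' cliqueVertices V) :
    ∃ a ∈ s, x = .inl a := by
  obtain ⟨q, hq, hxq⟩ := hxQ
  rcases x with a | i | u <;> rcases q with b | j | v <;>
    simp only [mem_coe, inr_inr_notMem_coneVertices, inl_notMem_cliqueVertices,
      inr_inl_notMem_cliqueVertices] at hx hq
  all_goals by_cases hv : v ∈ s <;> simp_all [reductionColoring]

theorem isHarmonious_reductionColoring {s : Finset V} (hs : ∀ a ∈ s, ∀ b ∈ s, ¬G.Adj a b) :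
    IsHarmonious (reductionGraph G) (reductionColoring s) := by
  refine isHarmonious_of_injOn (P := coneVertices V) (Q := cliqueVertices V) ?_ ?_
    (fun _ _ => reductionGraph_adj_mem_or_mem) ?_
  · rintro (a | i | u) hx (b | j | v) hy h <;> simp_all [reductionColoring]
  · rintro (a | i | u) hx (b | j | v) hy h <;>
      simp only [mem_coe, inl_notMem_cliqueVertices, inr_inl_notMem_cliqueVertices] at hx hy
    by_cases hu : u ∈ s <;> by_cases hv : v ∈ s <;> simp_all [reductionColoring]
  · rintro x ⟨hx, hxQ⟩ y ⟨hy, hyQ⟩ - hadj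
    obtain ⟨a, ha, rfl⟩ := exists_mem_eq_inl_of_reductionColoring_mem_image hx hxQ
    obtain ⟨b, hb, rfl⟩ := exists_mem_eq_inl_of_reductionColoring_mem_image hy hyQ
    exact hs a ha b hb (reductionGraph_adj_inl_inl.1 hadj)

end Reduction

theorem harmonious_reduction_iff_independent_set_general {V : Type*} [Fintype V]
    (G : SimpleGraph V) (k : ℕ) :
    (∃ c : (V ⊕ (Fin 3 ⊕ V)) → Fin (2 * Fintype.card V + 3 - k),
        IsHarmonious (reductionGraph G) c) ↔
    (∃ s : Finset V, s.card = k ∧ ∀ a ∈ s, ∀ b ∈ s, ¬ G.Adj a b) := by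
  classical
  constructor
  · rintro ⟨c, hc⟩
    have hcone := hc.injOn_coneVertices
    have hclique := hc.injOn_of_isClique isClique_cliqueVertices
    have hcount := card_add_card_le_card_add_card_filter_mem_image hcone hclique
    have hshared := card_filter_mem_image_le (cliqueVertices V) hcone
    -- rules out `2 * n + 3 < k`, where the number of colours truncates to `0`
    have hcolors : 0 < 2 * Fintype.card V + 3 - k := (c (.inr (.inl 0))).pos
    simp only [card_coneVertices, card_cliqueVertices, Fintype.card_fin] at hcount hshared
    exact exists_card_eq_of_isIndepSet_reductionGraph (filter_subset _ _)
      (hc.isIndepSet_filter_mem_image disjoint_coneVertices_cliqueVertices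
        isClique_cliqueVertices) (by omega) (by omega)
  · rintro ⟨s, rfl, hs⟩
    exact ⟨Fintype.equivFinOfCardEq (card_sum_fin_three_sum_compl s) ∘ reductionColoring s,
      (isHarmonious_reductionColoring hs).comp_injective (Equiv.injective _)⟩

theorem harmonious_reduction_iff_independent_set {V : Type*} [Fintype V]
    (G : SimpleGraph V) (k : ℕ) (hk : k ≤ Fintype.card V) :
    (∃ c : (V ⊕ (Fin 3 ⊕ V)) → Fin (2 * Fintype.card V + 3 - k),
        IsHarmonious (reductionGraph G) c) ↔
    (∃ s : Finset V, s.card = k ∧ ∀ a ∈ s, ∀ b ∈ s, ¬ G.Adj a b) :=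
  harmonious_reduction_iff_independent_set_general G k
end

section
/- For any finite simple undirected graph G with maximum degree Δ and minimum vertex cover of size VC, the harmonious chromatic number satisfies h(G) ≤ VC + Δ² − Δ + 1. -/
lemma greedy_color (k : ℕ) : ∀ (n : ℕ) (A : Fin n → Fin n → Prop),
    (∀ i j, A i j → A j i) → (∀ i, ¬ A i i) →
    (∀ i, ∃ s : Finset (Fin n), (∀ j, A i j → j ∈ s) ∧ s.card < k) →
    ∃ c : Fin n → Fin k, ∀ i j, A i j → c i ≠ c j := by
  intro n
  induction n with
  | zero => exact fun A _ _ _ => ⟨Fin.elim0, fun i => i.elim0⟩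
  | succ n ih =>
    intro A hsym hirr hk
    classical
    obtain ⟨c', hc'⟩ := ih (fun i j => A i.castSucc j.castSucc)
      (fun i j h => hsym _ _ h) (fun i => hirr _)
      (fun i => by
        obtain ⟨s, hs, hcard⟩ := hk i.castSucc
        refine ⟨s.preimage Fin.castSucc (Fin.castSucc_injective n).injOn,
          fun j hj => Finset.mem_preimage.2 (hs _ hj), ?_⟩
        have h1 : ((s.preimage Fin.castSucc (Fin.castSucc_injective n).injOn).image
            Fin.castSucc).card = (s.preimage Fin.castSucc (Fin.castSucc_injective n).injOn).card :=
          Finset.card_image_of_injective _ (Fin.castSucc_injective n)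
        have h2 : (s.preimage Fin.castSucc (Fin.castSucc_injective n).injOn).image
            Fin.castSucc ⊆ s := by
          intro x hx
          obtain ⟨y, hy, rfl⟩ := Finset.mem_image.1 hx
          exact Finset.mem_preimage.1 hy
        calc _ = _ := h1.symm
          _ ≤ s.card := Finset.card_le_card h2
          _ < k := hcard)
    obtain ⟨s, hs, hcard⟩ := hk (Fin.last n)
    have hkpos : 0 < k := lt_of_le_of_lt (Nat.zero_le _) hcard
    set g : Fin (n+1) → Fin k := Fin.lastCases ⟨0, hkpos⟩ c' with hg
    have hforb : (s.image g).card < k := lt_of_le_of_lt Finset.card_image_le hcard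
    obtain ⟨color, hcolor⟩ : ∃ color : Fin k, color ∉ s.image g := by
      by_contra h
      push_neg at h
      have hsub : (Finset.univ : Finset (Fin k)) ⊆ s.image g := fun x _ => h x
      have := Finset.card_le_card hsub
      simp [Finset.card_univ] at this
      omega
    refine ⟨Fin.snoc c' color, ?_⟩
    intro i j hij
    induction i using Fin.lastCases with
    | last =>
      induction j using Fin.lastCases with
      | last => exact absurd hij (hirr _)
      | cast j =>
        simp only [Fin.snoc_last, Fin.snoc_castSucc]
        intro hc
        apply hcolor
        rw [hc]
        exact Finset.mem_image.2 ⟨_, hs _ hij, by simp [hg]⟩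
    | cast i =>
      induction j using Fin.lastCases with
      | last =>
        simp only [Fin.snoc_last, Fin.snoc_castSucc]
        intro hc
        apply hcolor
        rw [← hc]
        exact Finset.mem_image.2 ⟨_, hs _ (hsym _ _ hij), by simp [hg]⟩
      | cast j =>
        simp only [Fin.snoc_castSucc]
        exact hc' _ _ hij


lemma greedy_color' {V : Type*} [Fintype V] (k : ℕ) (R : V → V → Prop)
    (hsym : ∀ u v, R u v → R v u) (hirr : ∀ u, ¬ R u u)
    (hk : ∀ u, ∃ s : Finset V, (∀ v, R u v → v ∈ s) ∧ s.card < k) :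
    ∃ c : V → Fin k, ∀ u v, R u v → c u ≠ c v := by
  classical
  set e := Fintype.equivFin V
  obtain ⟨c, hc⟩ := greedy_color k (Fintype.card V) (fun i j => R (e.symm i) (e.symm j))
    (fun i j h => hsym _ _ h) (fun i => hirr _)
    (fun i => by
      obtain ⟨s, hs, hcard⟩ := hk (e.symm i)
      refine ⟨s.image e, fun j hj => ?_, lt_of_le_of_lt Finset.card_image_le hcard⟩
      have := hs _ hj
      exact Finset.mem_image.2 ⟨_, this, by simp⟩)
  exact ⟨fun v => c (e v), fun u v h => hc (e u) (e v) (by simpa using h)⟩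

theorem harmonious_le_vertexCover {V : Type*} [Fintype V]
    (G : SimpleGraph V) [DecidableRel G.Adj]
    (S : Finset V) (hS : ∀ ⦃u v : V⦄, G.Adj u v → u ∈ S ∨ v ∈ S) :
    harmoniousChromaticNumber G ≤ S.card + G.maxDegree ^ 2 - G.maxDegree + 1 := by
  classical
  set Δ := G.maxDegree with hΔ
  set K := Δ * (Δ - 1) + 1 with hKdef
  -- the conflict relation on vertices outside S
  set R : V → V → Prop := fun u v =>
    u ∉ S ∧ v ∉ S ∧ u ≠ v ∧ ∃ w, G.Adj u w ∧ G.Adj v w with hR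
  obtain ⟨col, hcol⟩ : ∃ c : V → Fin K, ∀ u v, R u v → c u ≠ c v := by
    apply greedy_color'
    · rintro u v ⟨h1, h2, h3, w, h4, h5⟩; exact ⟨h2, h1, h3.symm, w, h5, h4⟩
    · rintro u ⟨_, _, h, _⟩; exact h rfl
    · intro u
      refine ⟨(G.neighborFinset u).biUnion (fun w => G.neighborFinset w \ {u}), ?_, ?_⟩
      · rintro v ⟨hu, hv, hne, w, huw, hvw⟩
        exact Finset.mem_biUnion.2 ⟨w, by simpa using huw,
          by simp [SimpleGraph.mem_neighborFinset, hvw.symm, hne.symm]⟩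
      · calc ((G.neighborFinset u).biUnion (fun w => G.neighborFinset w \ {u})).card
            ≤ ∑ w ∈ G.neighborFinset u, (G.neighborFinset w \ {u}).card :=
              Finset.card_biUnion_le
          _ ≤ ∑ w ∈ G.neighborFinset u, (Δ - 1) := by
              apply Finset.sum_le_sum
              intro w hw
              have hu : u ∈ G.neighborFinset w := by
                rw [SimpleGraph.mem_neighborFinset] at hw ⊢
                exact hw.symm
              have : (G.neighborFinset w \ {u}).card = G.degree w - 1 := by
                rw [Finset.card_sdiff_of_subset (by simpa using hu), Finset.card_singleton,
                  SimpleGraph.card_neighborFinset_eq_degree]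
              rw [this]
              exact Nat.sub_le_sub_right (G.degree_le_maxDegree w) 1
          _ = G.degree u * (Δ - 1) := by
              rw [Finset.sum_const, SimpleGraph.card_neighborFinset_eq_degree, smul_eq_mul]
          _ ≤ Δ * (Δ - 1) := Nat.mul_le_mul_right _ (G.degree_le_maxDegree u)
          _ < K := Nat.lt_succ_self _
  set eS := S.equivFin with heS
  set c : V → Fin (S.card + K) := fun v =>
    if h : v ∈ S then Fin.castAdd K (eS ⟨v, h⟩) else Fin.natAdd S.card (col v) with hc
  -- basic facts about c
  have hlow : ∀ v (h : v ∈ S), (c v : ℕ) < S.card := by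
    intro v h; simp [hc, h]
  have hhigh : ∀ v, v ∉ S → S.card ≤ (c v : ℕ) := by
    intro v h; simp [hc, h]
  have hmem : ∀ u v, c u = c v → (u ∈ S ↔ v ∈ S) := by
    intro u v h
    constructor
    · intro hu
      by_contra hv
      have := hlow u hu
      have := hhigh v hv
      rw [h] at *
      omega
    · intro hv
      by_contra hu
      have := hlow v hv
      have := hhigh u hu
      rw [h] at *
      omega
  have hinjS : ∀ u v, u ∈ S → v ∈ S → c u = c v → u = v := by
    intro u v hu hv h
    simp only [hc, dif_pos hu, dif_pos hv] at h
    have hx : eS ⟨u, hu⟩ = eS ⟨v, hv⟩ := Fin.ext (by simpa using congrArg Fin.val h)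
    simpa using eS.injective hx
  have hout : ∀ u v, u ∉ S → v ∉ S → c u = c v → col u = col v := by
    intro u v hu hv h
    simp only [hc, dif_neg hu, dif_neg hv] at h
    exact Fin.ext (by have := congrArg Fin.val h; simp at this; omega)
  -- key uniqueness lemma
  have key : ∀ a b a' b', G.Adj a b → G.Adj a' b' → c a = c a' → c b = c b' →
      a = a' ∧ b = b' := by
    intro a b a' b' hab ha'b' hca hcb
    by_cases ha : a ∈ S
    · have ha' : a' ∈ S := (hmem _ _ hca).1 ha
      have haa : a = a' := hinjS _ _ ha ha' hca
      subst haa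
      refine ⟨rfl, ?_⟩
      by_cases hb : b ∈ S
      · exact hinjS _ _ hb ((hmem _ _ hcb).1 hb) hcb
      · have hb' : b' ∉ S := fun h => hb ((hmem _ _ hcb).2 h)
        by_contra hne
        exact hcol b b' ⟨hb, hb', hne, a, hab.symm, ha'b'.symm⟩ (hout _ _ hb hb' hcb)
    · have ha' : a' ∉ S := fun h => ha ((hmem _ _ hca).2 h)
      have hb : b ∈ S := (hS hab).resolve_left ha
      have hb' : b' ∈ S := (hS ha'b').resolve_left ha'
      have hbb : b = b' := hinjS _ _ hb hb' hcb
      subst hbb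
      refine ⟨?_, rfl⟩
      by_contra hne
      exact hcol a a' ⟨ha, ha', hne, b, hab, ha'b'⟩ (hout _ _ ha ha' hca)
  have hharm : IsHarmonious G c := by
    constructor
    · intro u v huv h
      rcases hS huv with hu | hv
      · rcases hmem _ _ h with ⟨h1, _⟩
        exact huv.ne (hinjS _ _ hu (h1 hu) h)
      · rcases hmem _ _ h with ⟨_, h2⟩
        exact huv.ne (hinjS _ _ (h2 hv) hv h)
    · intro e he e' he' hmap
      induction e with
      | _ a b =>
        induction e' with
        | _ a' b' =>
          rw [SimpleGraph.mem_edgeSet] at he he'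
          simp only [Sym2.map_pair_eq, Sym2.eq_iff] at hmap ⊢
          rcases hmap with ⟨h1, h2⟩ | ⟨h1, h2⟩
          · obtain ⟨rfl, rfl⟩ := key a b a' b' he he' h1 h2
            exact Or.inl ⟨rfl, rfl⟩
          · obtain ⟨rfl, rfl⟩ := key a b b' a' he he'.symm h1 h2
            exact Or.inr ⟨rfl, rfl⟩
  have hΔle : Δ ≤ Δ ^ 2 := Nat.le_self_pow two_ne_zero Δ
  have hmul : Δ * (Δ - 1) = Δ ^ 2 - Δ := by
    cases Δ with
    | zero => simp
    | succ d => simp [pow_two, Nat.succ_sub_one, Nat.mul_sub, Nat.sub_sub]; ring_nf; omega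
  have heq : S.card + Δ ^ 2 - Δ + 1 = S.card + K := by
    rw [hKdef, hmul]; omega
  rw [hΔ] at heq ⊢
  rw [heq]
  exact Nat.sInf_le ⟨c, hharm⟩
end
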